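/- arXiv:1104.4861 — 2 statements merged into one kernel-verified Lean document; each statement's English description precedes it below -/
import Mathlib

section
/- Let v, ε, η, δt, δx > 0 and let the amplification factor be g₁(θ) = 1 - (v·δt/δx) - 4·(ε·δt/δx²)·sin²(θ/2) - (η·δt/δx^{4/3}) + [(v·δt/δx) + (2 - 2^{-1/3})·(η·δt/δx^{4/3})]·e^{-iθ} - (η·δt/δx^{4/3})·∑_{l=2}^{∞}[(l+1)^{-1/3} - 2l^{-1/3} + (l-1)^{-1/3}]·e^{-ilθ}. If for a given θ ∈ (0, π] the conditions (1 - 2^{-1/3})·(η·δt/δx^{4/3}) ≤ 2·(ε·δt/δx²)·sin²(θ/2) and (v·δt/δx) + 2·(ε·δt/δx²) + (2 - 2^{-1/3})·(η·δt/δx^{4/3}) ≤ 1 hold, then |g₁(θ)| ≤ 1. -/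
/-!
Write g₁ = L - c T, where c = η δt / δx^{4/3}, T is the series and
L = A + B e^{-iθ} with A, B real. The coefficients of T are second differences of the convex
function x ↦ x^{-1/3}: they are nonnegative and telescope to 1 - 2^{-1/3}, so ‖T‖ ≤ 1 - 2^{-1/3}.
Since |A + B e^{-iθ}|² = (A + B)² - 4AB sin²(θ/2), the two conditions give
‖L‖ ≤ 1 - (1 - 2^{-1/3}) c, and the triangle inequality closes the argument.
-/

open Real Complex Filter Topology

theorem two_mul_rpow_add_one_le {x p : ℝ} (hx : 0 < x) (hp : p ≤ 0) :
    2 * (x + 1) ^ p ≤ x ^ p + (x + 2) ^ p := by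
  have hmid_sq : ((x + 1) ^ p) ^ 2 ≤ x ^ p * (x + 2) ^ p := by
    rw [← Real.mul_rpow hx.le (by positivity), ← Real.rpow_natCast, ← Real.rpow_mul (by positivity),
      mul_comm p, Real.rpow_mul (by positivity), Real.rpow_natCast]
    exact Real.rpow_le_rpow_of_nonpos (by positivity) (by nlinarith) hp
  nlinarith [sq_nonneg (x ^ p - (x + 2) ^ p), Real.rpow_nonneg hx.le p,
    Real.rpow_nonneg (by positivity : (0 : ℝ) ≤ x + 2) p,
    Real.rpow_nonneg (by positivity : (0 : ℝ) ≤ x + 1) p]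

theorem second_diff_rpow_nonneg {p : ℝ} (hp : p ≤ 0) (n : ℕ) :
    0 ≤ ((n : ℝ) + 3) ^ p - 2 * ((n : ℝ) + 2) ^ p + ((n : ℝ) + 1) ^ p := by
  have := two_mul_rpow_add_one_le (by positivity : (0 : ℝ) < n + 1) hp
  ring_nf at this ⊢
  linarith

theorem hasSum_second_diff_of_tendsto_zero {f : ℕ → ℝ} (hf : Tendsto f atTop (𝓝 0))
    (hconv : ∀ n, 0 ≤ f (n + 2) - 2 * f (n + 1) + f n) :
    HasSum (fun n => f (n + 2) - 2 * f (n + 1) + f n) (f 0 - f 1) := by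
  rw [hasSum_iff_tendsto_nat_of_nonneg hconv]
  have hpartial : ∀ N, ∑ i ∈ Finset.range N, (f (i + 2) - 2 * f (i + 1) + f i)
      = (f (N + 1) - f N) - (f 1 - f 0) := fun N => by
    rw [← Finset.sum_range_sub (fun n => f (n + 1) - f n)]
    exact Finset.sum_congr rfl fun i _ => by ring
  simp_rw [hpartial]
  simpa using ((hf.comp (tendsto_add_atTop_nat 1)).sub hf).sub_const (f 1 - f 0)

theorem hasSum_second_diff_rpow {p : ℝ} (hp : p < 0) :
    HasSum (fun n : ℕ => ((n : ℝ) + 3) ^ p - 2 * ((n : ℝ) + 2) ^ p + ((n : ℝ) + 1) ^ p)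
      (1 - 2 ^ p) := by
  have hf : Tendsto (fun n : ℕ => ((n : ℝ) + 1) ^ p) atTop (𝓝 0) := by
    simpa [Function.comp_def] using (tendsto_rpow_neg_atTop (neg_pos.2 hp)).comp
      (tendsto_atTop_add_const_right atTop 1 tendsto_natCast_atTop_atTop)
  have h := hasSum_second_diff_of_tendsto_zero hf fun n => by
    have := second_diff_rpow_nonneg hp.le n
    push_cast
    ring_nf at this ⊢
    linarith
  convert h using 1
  · ext n; push_cast; ring_nf
  · norm_num

theorem norm_tsum_ofReal_mul_le {κ : ℕ → ℝ} {s : ℝ} (hκ : ∀ n, 0 ≤ κ n) (hs : HasSum κ s)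
    {z : ℕ → ℂ} (hz : ∀ n, ‖z n‖ ≤ 1) : ‖∑' n, (κ n : ℂ) * z n‖ ≤ s :=
  tsum_of_norm_bounded hs fun n => by
    rw [norm_mul, Complex.norm_real, Real.norm_of_nonneg (hκ n)]
    exact mul_le_of_le_one_right (hκ n) (hz n)

theorem norm_add_mul_exp_neg_mul_I_sq (A B θ : ℝ) :
    ‖(A : ℂ) + B * exp (-(θ : ℂ) * I)‖ ^ 2 = (A + B) ^ 2 - 4 * A * B * Real.sin (θ / 2) ^ 2 := by
  have hexp : exp (-(θ : ℂ) * I) = ((Real.cos θ : ℝ) : ℂ) + ((-Real.sin θ : ℝ) : ℂ) * I := by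
    rw [← Complex.ofReal_neg, ← Real.cos_neg, ← Real.sin_neg, ← Complex.exp_ofReal_mul_I_re,
      ← Complex.exp_ofReal_mul_I_im, Complex.re_add_im]
  have hcos : Real.cos θ = 1 - 2 * Real.sin (θ / 2) ^ 2 := by
    rw [← Real.cos_two_mul_eq_one_sub, mul_div_cancel₀ θ two_ne_zero]
  have hsplit : (A : ℂ) + B * exp (-(θ : ℂ) * I)
      = ((A + B * Real.cos θ : ℝ) : ℂ) + ((-(B * Real.sin θ)) : ℝ) * I := by
    rw [hexp]; push_cast; ring
  rw [hsplit, Complex.sq_norm, Complex.normSq_add_mul_I]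
  linear_combination B ^ 2 * Real.sin_sq_add_cos_sq θ + 2 * A * B * hcos

theorem local_part_sq_le {a b c σ u : ℝ} (ha : 0 ≤ a) (hb : 0 ≤ b) (hc : 0 ≤ c) (hσ : 0 ≤ σ)
    (hu₀ : 0 ≤ u) (hu₁ : u ≤ 1) (h₁ : σ * c ≤ 2 * b * u) (h₂ : a + 2 * b + (1 + σ) * c ≤ 1) :
    ((1 - a - 4 * b * u - c) + (a + (1 + σ) * c)) ^ 2
      - 4 * (1 - a - 4 * b * u - c) * (a + (1 + σ) * c) * u ≤ (1 - σ * c) ^ 2 := by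
  set B := a + (1 + σ) * c
  have hB : 0 ≤ B := by positivity
  have hu_le : u * (2 * b + B) ≤ 1 := by nlinarith
  -- each of the three products on the right is a product of nonnegative factors
  have hdefect : (1 - σ * c) ^ 2 - (((1 - a - 4 * b * u - c) + B) ^ 2
      - 4 * (1 - a - 4 * b * u - c) * B * u)
      = 4 * ((2 * b * u - σ * c) * (1 - u * (2 * b + B))
        + u * B * (1 - (a + 2 * b + (1 + σ) * c)) + 2 * b * u * (1 - u) * B) := by
    ring
  nlinarith [mul_nonneg (sub_nonneg.2 h₁) (sub_nonneg.2 hu_le),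
    mul_nonneg (mul_nonneg hu₀ hB) (sub_nonneg.2 h₂),
    mul_nonneg (mul_nonneg (mul_nonneg hb hu₀) (sub_nonneg.2 hu₁)) hB]

theorem norm_local_part_le {a b c σ θ : ℝ} (ha : 0 ≤ a) (hb : 0 ≤ b) (hc : 0 ≤ c) (hσ : 0 ≤ σ)
    (h₁ : σ * c ≤ 2 * b * Real.sin (θ / 2) ^ 2) (h₂ : a + 2 * b + (1 + σ) * c ≤ 1) :
    ‖((1 - a - 4 * b * Real.sin (θ / 2) ^ 2 - c : ℝ) : ℂ)
      + ((a + (1 + σ) * c : ℝ) : ℂ) * exp (-(θ : ℂ) * I)‖ ≤ 1 - σ * c := by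
  have hR : 0 ≤ 1 - σ * c := by nlinarith
  rw [← pow_le_pow_iff_left₀ (norm_nonneg _) hR two_ne_zero, norm_add_mul_exp_neg_mul_I_sq]
  exact local_part_sq_le ha hb hc hσ (sq_nonneg _) (Real.sin_sq_le_one _) h₁ h₂

theorem stability_g1_general (v ε η δt δx : ℝ) (hv : 0 < v) (hε : 0 < ε) (hη : 0 < η)
    (hδt : 0 < δt) (hδx : 0 < δx) (θ : ℝ)
    (hcond1 : (1 - (2 : ℝ) ^ (-(1 / 3) : ℝ)) * (η * δt / δx ^ ((4 : ℝ) / 3)) ≤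
        2 * (ε * δt / δx ^ 2) * Real.sin (θ / 2) ^ 2)
    (hcond2 : v * δt / δx + 2 * (ε * δt / δx ^ 2) +
        (2 - (2 : ℝ) ^ (-(1 / 3) : ℝ)) * (η * δt / δx ^ ((4 : ℝ) / 3)) ≤ 1) :
    ‖((1 : ℂ) - (v * δt / δx : ℝ) - 4 * ((ε * δt / δx ^ 2 : ℝ) : ℂ) * (Real.sin (θ / 2) : ℂ) ^ 2
        - ((η * δt / δx ^ ((4 : ℝ) / 3) : ℝ) : ℂ)
        + (((v * δt / δx : ℝ) : ℂ) +
            ((2 - (2 : ℝ) ^ (-(1 / 3) : ℝ) : ℝ) : ℂ) * ((η * δt / δx ^ ((4 : ℝ) / 3) : ℝ) : ℂ)) *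
          Complex.exp (-(θ : ℂ) * Complex.I)
        - ((η * δt / δx ^ ((4 : ℝ) / 3) : ℝ) : ℂ) *
          ∑' n : ℕ,
            ((((n : ℝ) + 3) ^ (-(1 / 3) : ℝ) - 2 * ((n : ℝ) + 2) ^ (-(1 / 3) : ℝ)
                + ((n : ℝ) + 1) ^ (-(1 / 3) : ℝ) : ℝ) : ℂ) *
              Complex.exp (-((n : ℂ) + 2) * (θ : ℂ) * Complex.I))‖ ≤ 1 := by
  set a := v * δt / δx
  set b := ε * δt / δx ^ 2
  set c := η * δt / δx ^ ((4 : ℝ) / 3)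
  set m := (2 : ℝ) ^ (-(1 / 3) : ℝ)
  set T := ∑' n : ℕ, ((((n : ℝ) + 3) ^ (-(1 / 3) : ℝ) - 2 * ((n : ℝ) + 2) ^ (-(1 / 3) : ℝ)
      + ((n : ℝ) + 1) ^ (-(1 / 3) : ℝ) : ℝ) : ℂ) * exp (-((n : ℂ) + 2) * (θ : ℂ) * I)
  have hc : 0 ≤ c := by positivity
  have hσ : 0 ≤ 1 - m := sub_nonneg.2 (Real.rpow_le_one_of_one_le_of_nonpos one_le_two (by norm_num))
  have hlocal := norm_local_part_le (a := a) (θ := θ) (by positivity) (by positivity) hc hσ hcond1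
    (by linarith)
  have htail : ‖T‖ ≤ 1 - m :=
    norm_tsum_ofReal_mul_le (second_diff_rpow_nonneg (by norm_num))
      (hasSum_second_diff_rpow (by norm_num)) fun n => by simp [Complex.norm_exp]
  calc _ = ‖((1 - a - 4 * b * Real.sin (θ / 2) ^ 2 - c : ℝ) : ℂ)
        + ((a + (1 + (1 - m)) * c : ℝ) : ℂ) * exp (-(θ : ℂ) * I) - (c : ℂ) * T‖ := by
          congr 1; push_cast; ring
    _ ≤ (1 - (1 - m) * c) + c * (1 - m) := by
      refine (norm_sub_le _ _).trans (add_le_add hlocal ?_)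
      rw [norm_mul, Complex.norm_real, Real.norm_of_nonneg hc]
      exact mul_le_mul_of_nonneg_left htail hc
    _ = 1 := by ring

theorem stability_g1 (v ε η δt δx : ℝ) (hv : 0 < v) (hε : 0 < ε) (hη : 0 < η)
    (hδt : 0 < δt) (hδx : 0 < δx) (θ : ℝ) (hθ : θ ∈ Set.Ioc 0 Real.pi)
    (hcond1 : (1 - (2 : ℝ) ^ (-(1 / 3) : ℝ)) * (η * δt / δx ^ ((4 : ℝ) / 3)) ≤
        2 * (ε * δt / δx ^ 2) * Real.sin (θ / 2) ^ 2)
    (hcond2 : v * δt / δx + 2 * (ε * δt / δx ^ 2) +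
        (2 - (2 : ℝ) ^ (-(1 / 3) : ℝ)) * (η * δt / δx ^ ((4 : ℝ) / 3)) ≤ 1) :
    ‖((1 : ℂ) - (v * δt / δx : ℝ) - 4 * ((ε * δt / δx ^ 2 : ℝ) : ℂ) * (Real.sin (θ / 2) : ℂ) ^ 2
        - ((η * δt / δx ^ ((4 : ℝ) / 3) : ℝ) : ℂ)
        + (((v * δt / δx : ℝ) : ℂ) +
            ((2 - (2 : ℝ) ^ (-(1 / 3) : ℝ) : ℝ) : ℂ) * ((η * δt / δx ^ ((4 : ℝ) / 3) : ℝ) : ℂ)) *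
          Complex.exp (-(θ : ℂ) * Complex.I)
        - ((η * δt / δx ^ ((4 : ℝ) / 3) : ℝ) : ℂ) *
          ∑' n : ℕ,
            ((((n : ℝ) + 3) ^ (-(1 / 3) : ℝ) - 2 * ((n : ℝ) + 2) ^ (-(1 / 3) : ℝ)
                + ((n : ℝ) + 1) ^ (-(1 / 3) : ℝ) : ℝ) : ℂ) *
              Complex.exp (-((n : ℂ) + 2) * (θ : ℂ) * Complex.I))‖ ≤ 1 :=
  stability_g1_general v ε η δt δx hv hε hη hδt hδx θ hcond1 hcond2
end

section
/- Let v, ε, η, δt, δx > 0 and let g₂(θ) = 1 - (v·δt/δx) - 4·(ε·δt/δx²)·sin²(θ/2) + (4/9)·(η·δt/δx^{4/3})·(ζ(7/3) - ζ(4/3)·cos θ) + [(v·δt/δx) + (4/9)·(ζ(4/3) - 1)·(η·δt/δx^{4/3})]·e^{-iθ} - (4/9)·(η·δt/δx^{4/3})·∑_{l=2}^{∞} l^{-7/3}·e^{-ilθ}. If for a given θ ∈ (0, π] the conditions (4/9)·(ζ(7/3) - 1 + ζ(4/3))·(η·δt/δx^{4/3}) ≤ 2·(ε·δt/δx²)·sin²(θ/2)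 and (v·δt/δx) + 2·(ε·δt/δx²) + (4/9)·(ζ(4/3) - 1)·(η·δt/δx^{4/3}) ≤ 1 hold, then |g₂(θ)| ≤ 1. -/
/-!
Write `a = vδt/δx`, `b = εδt/δx²`, `c = ηδt/δx^{4/3}`. The amplification factor splits as
`g₂ = K + B e^{-iθ} - (4/9) c T` with `K` real, `B = a + (4/9)(ζ(4/3) - 1) c ≥ 0` and
`T = ∑_{l ≥ 2} l^{-7/3} e^{-ilθ}`, so that `|T| ≤ ζ(7/3) - 1`. The triangle inequality gives
`|g₂| ≤ |K| + B + (4/9) c (ζ(7/3) - 1)`; after writing `cos θ = 1 - 2 sin²(θ/2)`, this real bound is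
at most `1` by the first condition when `K ≥ 0` and by the second when `K < 0`.
-/

open Real Complex

lemma summable_nat_add_rpow_neg {p : ℝ} (hp : 1 < p) (k : ℕ) :
    Summable fun n : ℕ => ((n : ℝ) + k) ^ (-p) := by
  have := (summable_nat_add_iff k).mpr (Real.summable_nat_rpow.mpr (neg_lt_neg hp))
  simpa only [Nat.cast_add] using this

lemma riemannZeta_re_eq_tsum {p : ℝ} (hp : 1 < p) :
    (riemannZeta p).re = ∑' n : ℕ, ((n : ℝ) + 1) ^ (-p) := by
  rw [zeta_eq_tsum_one_div_nat_add_one_cpow (by simpa using hp), ← ofReal_re (∑' n : ℕ, _),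
    ofReal_tsum]
  congr 1
  refine tsum_congr fun n => ?_
  rw [one_div, ← ofReal_natCast, ← ofReal_one, ← ofReal_add, ← ofReal_cpow (by positivity),
    ← ofReal_inv, Real.rpow_neg (by positivity)]

lemma tsum_nat_add_two_rpow_neg {p : ℝ} (hp : 1 < p) :
    ∑' n : ℕ, ((n : ℝ) + 2) ^ (-p) = (riemannZeta p).re - 1 := by
  have hsum : Summable fun n : ℕ => ((n : ℝ) + 1) ^ (-p) := by
    simpa using summable_nat_add_rpow_neg hp 1
  rw [riemannZeta_re_eq_tsum hp, hsum.tsum_eq_zero_add]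
  norm_num [add_assoc, one_add_one_eq_two]

lemma one_le_riemannZeta_re {p : ℝ} (hp : 1 < p) : 1 ≤ (riemannZeta p).re := by
  have := tsum_nat_add_two_rpow_neg hp ▸ tsum_nonneg fun n : ℕ => by positivity
  linarith

lemma norm_tsum_rpow_neg_mul_exp_le {p : ℝ} (hp : 1 < p) (θ : ℝ) :
    ‖∑' n : ℕ, ((((n : ℝ) + 2) ^ (-p) : ℝ) : ℂ) * exp (-((n : ℂ) + 2) * θ * I)‖ ≤
      (riemannZeta p).re - 1 := by
  have hnorm (n : ℕ) :
      ‖((((n : ℝ) + 2) ^ (-p) : ℝ) : ℂ) * exp (-((n : ℂ) + 2) * θ * I)‖ = ((n : ℝ) + 2) ^ (-p) := by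
    rw [norm_mul, norm_real, Real.norm_of_nonneg (by positivity), ← ofReal_natCast,
      ← ofReal_ofNat, ← ofReal_add, ← ofReal_neg, ← ofReal_mul, norm_exp_ofReal_mul_I, mul_one]
  have hsum : Summable fun n : ℕ => ((n : ℝ) + 2) ^ (-p) := by
    simpa using summable_nat_add_rpow_neg hp 2
  rw [← tsum_nat_add_two_rpow_neg hp, ← tsum_congr hnorm]
  exact norm_tsum_le_tsum_norm (hsum.congr fun n => (hnorm n).symm)

lemma norm_ofReal_add_mul_sub_mul_le {K B C t : ℝ} (hB : 0 ≤ B) (hC : 0 ≤ C) {e T : ℂ}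
    (he : ‖e‖ = 1) (hT : ‖T‖ ≤ t) : ‖(K : ℂ) + B * e - C * T‖ ≤ |K| + B + C * t :=
  calc ‖(K : ℂ) + B * e - C * T‖ ≤ ‖(K : ℂ)‖ + ‖(B : ℂ) * e‖ + ‖(C : ℂ) * T‖ :=
        norm_sub_le_of_le (norm_add_le _ _) le_rfl
    _ = |K| + B + C * ‖T‖ := by
        rw [norm_mul, norm_mul, he, norm_real, norm_real, norm_real, Real.norm_eq_abs,
          Real.norm_of_nonneg hB, Real.norm_of_nonneg hC, mul_one]
    _ ≤ |K| + B + C * t := by gcongr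

lemma abs_add_add_le_one {a b c z₇ z₄ s : ℝ} (hb : 0 ≤ b) (hc : 0 ≤ c)
    (hz₄ : 0 ≤ z₄) (hs : s ^ 2 ≤ 1)
    (h₁ : 4 / 9 * (z₇ - 1 + z₄) * c ≤ 2 * b * s ^ 2)
    (h₂ : a + 2 * b + 4 / 9 * (z₄ - 1) * c ≤ 1) :
    |1 - a - 4 * b * s ^ 2 + 4 / 9 * c * (z₇ - z₄ * (1 - 2 * s ^ 2))| +
      (a + 4 / 9 * (z₄ - 1) * c) + 4 / 9 * c * (z₇ - 1) ≤ 1 := by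
  have hcz : 0 ≤ c * z₄ := mul_nonneg hc hz₄
  rcases le_or_gt 0 (1 - a - 4 * b * s ^ 2 + 4 / 9 * c * (z₇ - z₄ * (1 - 2 * s ^ 2))) with h | h
  · rw [abs_of_nonneg h]
    nlinarith [mul_nonneg hcz (sub_nonneg.mpr hs)]
  · rw [abs_of_neg h]
    nlinarith [mul_nonneg hb (sub_nonneg.mpr hs), mul_nonneg hcz (sq_nonneg s)]

theorem stability_g2_general (v ε η δt δx : ℝ) (hv : 0 < v) (hε : 0 < ε) (hη : 0 < η)
    (hδt : 0 < δt) (hδx : 0 < δx) (θ : ℝ)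
    (hcond1 : (4 / 9) * ((riemannZeta ((7 : ℂ) / 3)).re - 1 + (riemannZeta ((4 : ℂ) / 3)).re) *
        (η * δt / δx ^ ((4 : ℝ) / 3)) ≤ 2 * (ε * δt / δx ^ 2) * Real.sin (θ / 2) ^ 2)
    (hcond2 : v * δt / δx + 2 * (ε * δt / δx ^ 2) +
        (4 / 9) * ((riemannZeta ((4 : ℂ) / 3)).re - 1) * (η * δt / δx ^ ((4 : ℝ) / 3)) ≤ 1) :
    ‖
      ((1 : ℂ) - (v * δt / δx : ℝ) - 4 * ((ε * δt / δx ^ 2 : ℝ) : ℂ) * (Real.sin (θ / 2) : ℂ) ^ 2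
        + (4 / 9) * ((η * δt / δx ^ ((4 : ℝ) / 3) : ℝ) : ℂ) *
            (((riemannZeta ((7 : ℂ) / 3)).re : ℂ) -
              ((riemannZeta ((4 : ℂ) / 3)).re : ℂ) * (Real.cos θ : ℂ))
        + (((v * δt / δx : ℝ) : ℂ) +
            (4 / 9) * (((riemannZeta ((4 : ℂ) / 3)).re : ℂ) - 1) *
              ((η * δt / δx ^ ((4 : ℝ) / 3) : ℝ) : ℂ)) * Complex.exp (-(θ : ℂ) * Complex.I)
        - (4 / 9) * ((η * δt / δx ^ ((4 : ℝ) / 3) : ℝ) : ℂ) *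
          ∑' n : ℕ,
            ((((n : ℝ) + 2) ^ (-(7 / 3) : ℝ) : ℝ) : ℂ) *
              Complex.exp (-((n : ℂ) + 2) * (θ : ℂ) * Complex.I))‖ ≤ 1 := by
  have h₇ : (7 : ℂ) / 3 = ((7 / 3 : ℝ) : ℂ) := by push_cast; rfl
  have h₄ : (4 : ℂ) / 3 = ((4 / 3 : ℝ) : ℂ) := by push_cast; rfl
  simp only [h₇, h₄] at hcond1 hcond2 ⊢
  set a := v * δt / δx
  set b := ε * δt / δx ^ 2
  set c := η * δt / δx ^ ((4 : ℝ) / 3)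
  set s := Real.sin (θ / 2)
  have hz₄ := one_le_riemannZeta_re (p := 4 / 3) (by norm_num)
  have hcos : Real.cos θ = 1 - 2 * s ^ 2 := by
    rw [sin_sq_eq_half_sub, mul_div_cancel₀ θ two_ne_zero]; ring
  have hC : 0 ≤ 4 / 9 * c := by positivity
  have hB : 0 ≤ a + 4 / 9 * ((riemannZeta ((4 / 3 : ℝ) : ℂ)).re - 1) * c := by
    have : 0 ≤ a := by positivity
    nlinarith
  calc _ = ‖((1 - a - 4 * b * s ^ 2 + 4 / 9 * c *
          ((riemannZeta ((7 / 3 : ℝ) : ℂ)).re - (riemannZeta ((4 / 3 : ℝ) : ℂ)).re * (1 - 2 * s ^ 2))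
          : ℝ) : ℂ) + ((a + 4 / 9 * ((riemannZeta ((4 / 3 : ℝ) : ℂ)).re - 1) * c : ℝ) : ℂ) *
          exp (-(θ : ℂ) * I) - ((4 / 9 * c : ℝ) : ℂ) *
          ∑' n : ℕ, ((((n : ℝ) + 2) ^ (-(7 / 3) : ℝ) : ℝ) : ℂ) * exp (-((n : ℂ) + 2) * θ * I)‖ := by
        rw [hcos]; push_cast; ring
    _ ≤ _ := norm_ofReal_add_mul_sub_mul_le hB hC (by simpa using norm_exp_ofReal_mul_I (-θ))
        (norm_tsum_rpow_neg_mul_exp_le (by norm_num) θ)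
    _ ≤ 1 := abs_add_add_le_one (by positivity) (by positivity) (by linarith) (sin_sq_le_one _)
        (by linarith) (by linarith)

theorem stability_g2 (v ε η δt δx : ℝ) (hv : 0 < v) (hε : 0 < ε) (hη : 0 < η)
    (hδt : 0 < δt) (hδx : 0 < δx) (θ : ℝ) (hθ : θ ∈ Set.Ioc 0 Real.pi)
    (hcond1 : (4 / 9) * ((riemannZeta ((7 : ℂ) / 3)).re - 1 + (riemannZeta ((4 : ℂ) / 3)).re) *
        (η * δt / δx ^ ((4 : ℝ) / 3)) ≤ 2 * (ε * δt / δx ^ 2) * Real.sin (θ / 2) ^ 2)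
    (hcond2 : v * δt / δx + 2 * (ε * δt / δx ^ 2) +
        (4 / 9) * ((riemannZeta ((4 : ℂ) / 3)).re - 1) * (η * δt / δx ^ ((4 : ℝ) / 3)) ≤ 1) :
    ‖
      ((1 : ℂ) - (v * δt / δx : ℝ) - 4 * ((ε * δt / δx ^ 2 : ℝ) : ℂ) * (Real.sin (θ / 2) : ℂ) ^ 2
        + (4 / 9) * ((η * δt / δx ^ ((4 : ℝ) / 3) : ℝ) : ℂ) *
            (((riemannZeta ((7 : ℂ) / 3)).re : ℂ) -
              ((riemannZeta ((4 : ℂ) / 3)).re : ℂ) * (Real.cos θ : ℂ))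
        + (((v * δt / δx : ℝ) : ℂ) +
            (4 / 9) * (((riemannZeta ((4 : ℂ) / 3)).re : ℂ) - 1) *
              ((η * δt / δx ^ ((4 : ℝ) / 3) : ℝ) : ℂ)) * Complex.exp (-(θ : ℂ) * Complex.I)
        - (4 / 9) * ((η * δt / δx ^ ((4 : ℝ) / 3) : ℝ) : ℂ) *
          ∑' n : ℕ,
            ((((n : ℝ) + 2) ^ (-(7 / 3) : ℝ) : ℝ) : ℂ) *
              Complex.exp (-((n : ℂ) + 2) * (θ : ℂ) * Complex.I))‖ ≤ 1 :=
  stability_g2_general v ε η δt δx hv hε hη hδt hδx θ hcond1 hcond2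
end
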